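/- Let n ≥ 2 and let E be a real n×n matrix with E i i = 0 for all i and 0 ≤ E i j < 1/(n−1) for all i, j. Fix indices k ≠ t and Δ > 0, let E' = E + Δ·(stdBasisMatrix k t 1), and assume E' k t < 1/(n−1) as well. Let P = (I − E)⁻¹ and P' = (I − E')⁻¹. Then P' k t − P k t > 0, and for all indices i, j with i ≠ k or j ≠ t, P' k t − P k t > P' i j − P i j. -/

import Mathlib

/-!
Since `(1 - E) - (1 - E') = Δ • single k t 1`, the resolvent identity gives
`P' i j - P i j = Δ * P' i k * P t j`. Zero diagonal and entries below `1/(n-1)` make every row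
and column sum of `E` and `E'` less than `1`. For a nonnegative `F` with row sums below `1`,
`Q = (1 - F)⁻¹` solves `Q = 1 + F * Q`, so a minimum principle makes `Q` nonnegative and a maximum
principle makes each column of `Q` peak strictly at its diagonal entry; by transposition, column
sums below `1` make each row peak at the diagonal. Hence `P' i k ≤ P' k k` and `P t j ≤ P t t`,
with one of them strict unless `(i, j) = (k, t)`.
-/

open Matrix Finset

variable {ι : Type*}

section

variable [Fintype ι]

theorem sum_mul_lt_of_le {F : Matrix ι ι ℝ} (hF : ∀ i j, 0 ≤ F i j) (hrow : ∀ i, ∑ j, F i j < 1)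
    {v : ι → ℝ} {M : ℝ} (hv : ∀ j, v j ≤ M) (hM : 0 < M) (i : ι) : ∑ j, F i j * v j < M :=
  calc ∑ j, F i j * v j ≤ ∑ j, F i j * M :=
        sum_le_sum fun j _ => mul_le_mul_of_nonneg_left (hv j) (hF i j)
    _ = (∑ j, F i j) * M := (sum_mul ..).symm
    _ < M := mul_lt_of_lt_one_left hM (hrow i)

variable [DecidableEq ι]

theorem sum_lt_one_of_lt_inv_card_sub_one {v : ι → ℝ} {i : ι} (hi : v i = 0)
    (hv : ∀ j, v j < 1 / ((Fintype.card ι : ℝ) - 1)) : ∑ j, v j < 1 := by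
  rw [← sum_erase _ hi]
  rcases (univ.erase i).eq_empty_or_nonempty with hempty | hne
  · simp [hempty]
  have hcard : ((univ.erase i).card : ℝ) = (Fintype.card ι : ℝ) - 1 := by
    rw [card_erase_of_mem (mem_univ i), card_univ,
      Nat.cast_sub (Fintype.card_pos_iff.mpr ⟨i⟩), Nat.cast_one]
  calc ∑ j ∈ univ.erase i, v j < ∑ _j ∈ univ.erase i, 1 / ((Fintype.card ι : ℝ) - 1) :=
        sum_lt_sum_of_nonempty hne fun j _ => hv j
    _ = 1 := by
        rw [sum_const, nsmul_eq_mul, ← hcard, mul_one_div_cancel]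
        exact_mod_cast hne.card_pos.ne'

theorem Matrix.mul_single_mul_apply {R : Type*} [CommSemiring R] (M N : Matrix ι ι R)
    (k t i j : ι) (c : R) : (M * single k t c * N) i j = M i k * c * N t j := by
  simp [mul_apply, single_apply, ite_and]

section Substochastic

variable {F : Matrix ι ι ℝ}

theorem det_one_sub_ne_zero (hF : ∀ i j, 0 ≤ F i j) (hrow : ∀ i, ∑ j, F i j < 1) :
    (1 - F).det ≠ 0 := by
  refine det_ne_zero_of_sum_row_lt_diag fun i => ?_
  have hsplit := add_sum_erase univ (fun j => F i j) (mem_univ i)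
  have hoff : ∀ j ∈ univ.erase i, ‖(1 - F) i j‖ = F i j := fun j hj => by
    simp [one_apply_ne' (ne_of_mem_erase hj), abs_of_nonneg (hF i j)]
  rw [sum_congr rfl hoff]
  simp only [Matrix.sub_apply, one_apply_eq, Real.norm_eq_abs]
  have hoff_nonneg : 0 ≤ ∑ j ∈ univ.erase i, F i j := sum_nonneg fun j _ => hF i j
  rw [abs_of_pos] <;> linarith [hrow i]

theorem one_sub_inv_apply (hdet : IsUnit (1 - F).det) (i j : ι) :
    (1 - F)⁻¹ i j = (1 : Matrix ι ι ℝ) i j + ∑ s, F i s * (1 - F)⁻¹ s j := by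
  have h := mul_nonsing_inv (1 - F) hdet
  rw [sub_mul, one_mul, sub_eq_iff_eq_add] at h
  exact congrFun (congrFun h i) j

variable (hF : ∀ i j, 0 ≤ F i j) (hrow : ∀ i, ∑ j, F i j < 1)
include hF hrow

theorem isUnit_det_one_sub : IsUnit (1 - F).det :=
  (det_one_sub_ne_zero hF hrow).isUnit

theorem one_sub_inv_nonneg (i j : ι) : 0 ≤ (1 - F)⁻¹ i j := by
  obtain ⟨m, -, hm⟩ := exists_min_image univ (fun s => (1 - F)⁻¹ s j) ⟨i, mem_univ i⟩
  refine le_trans ?_ (hm i (mem_univ i))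
  by_contra! hneg
  have hlt := sum_mul_lt_of_le hF hrow (v := fun s => -(1 - F)⁻¹ s j)
    (fun s => neg_le_neg (hm s (mem_univ s))) (neg_pos.mpr hneg) m
  have hone : (0 : ℝ) ≤ (1 : Matrix ι ι ℝ) m j := by rw [one_apply]; split_ifs <;> norm_num
  have hm_eq := one_sub_inv_apply (isUnit_det_one_sub hF hrow) m j
  simp only [mul_neg, sum_neg_distrib, neg_lt_neg_iff] at hlt
  linarith

theorem one_le_one_sub_inv_diag (j : ι) : 1 ≤ (1 - F)⁻¹ j j := by
  rw [one_sub_inv_apply (isUnit_det_one_sub hF hrow), one_apply_eq, le_add_iff_nonneg_right]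
  exact sum_nonneg fun s _ => mul_nonneg (hF j s) (one_sub_inv_nonneg hF hrow s j)

theorem one_sub_inv_apply_lt_of_le {i j : ι} (hij : i ≠ j) {M : ℝ}
    (hM : ∀ s, (1 - F)⁻¹ s j ≤ M) : (1 - F)⁻¹ i j < M := by
  rw [one_sub_inv_apply (isUnit_det_one_sub hF hrow), one_apply_ne hij, zero_add]
  exact sum_mul_lt_of_le hF hrow hM
    (one_le_one_sub_inv_diag hF hrow j |>.trans (hM j) |> lt_of_lt_of_le one_pos) i

theorem one_sub_inv_apply_le_diag (i j : ι) : (1 - F)⁻¹ i j ≤ (1 - F)⁻¹ j j := by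
  obtain ⟨m, -, hm⟩ := exists_max_image univ (fun s => (1 - F)⁻¹ s j) ⟨i, mem_univ i⟩
  obtain rfl | hmj := eq_or_ne m j
  · exact hm i (mem_univ i)
  · exact (lt_irrefl _ (one_sub_inv_apply_lt_of_le hF hrow hmj fun s => hm s (mem_univ s))).elim

theorem one_sub_inv_apply_lt_diag {i j : ι} (hij : i ≠ j) : (1 - F)⁻¹ i j < (1 - F)⁻¹ j j :=
  one_sub_inv_apply_lt_of_le hF hrow hij (one_sub_inv_apply_le_diag hF hrow · j)

end Substochastic

theorem one_sub_transpose_inv (F : Matrix ι ι ℝ) : (1 - Fᵀ)⁻¹ = ((1 - F)⁻¹)ᵀ := by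
  rw [transpose_nonsing_inv, transpose_sub, transpose_one]

section ColumnSums

variable {F : Matrix ι ι ℝ} (hF : ∀ i j, 0 ≤ F i j) (hcol : ∀ j, ∑ i, F i j < 1)
include hF hcol

theorem one_sub_inv_apply_le_diag_of_col (i j : ι) : (1 - F)⁻¹ i j ≤ (1 - F)⁻¹ i i := by
  simpa only [one_sub_transpose_inv, transpose_apply] using
    one_sub_inv_apply_le_diag (F := Fᵀ) (fun i j => hF j i) hcol j i

theorem one_sub_inv_apply_lt_diag_of_col {i j : ι} (hij : i ≠ j) :
    (1 - F)⁻¹ i j < (1 - F)⁻¹ i i := by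
  simpa only [one_sub_transpose_inv, transpose_apply] using
    one_sub_inv_apply_lt_diag (F := Fᵀ) (fun i j => hF j i) hcol hij.symm

end ColumnSums

theorem inv_sub_inv_apply_of_sub_eq_single {R : Type*} [CommRing R] {A B : Matrix ι ι R}
    (hA : IsUnit A.det) (hB : IsUnit B.det) {k t : ι} {c : R} (hAB : B - A = single k t c)
    (i j : ι) : (A⁻¹ - B⁻¹) i j = c * (A⁻¹ i k * B⁻¹ t j) := by
  have hunit : IsUnit A ↔ IsUnit B :=
    iff_of_true ((isUnit_iff_isUnit_det A).mpr hA) ((isUnit_iff_isUnit_det B).mpr hB)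
  rw [inv_sub_inv hunit, hAB, mul_single_mul_apply]
  ring

end

section Perturbation

variable [DecidableEq ι] {E : Matrix ι ι ℝ} {Δ : ℝ} {k t : ι}

theorem add_smul_single_bounds {c : ℝ} (hE : ∀ i j, 0 ≤ E i j ∧ E i j < c) (hΔ : 0 ≤ Δ)
    (hkt : (E + Δ • single k t (1 : ℝ)) k t < c) (i j : ι) :
    0 ≤ (E + Δ • single k t (1 : ℝ)) i j ∧ (E + Δ • single k t (1 : ℝ)) i j < c := by
  by_cases hij : k = i ∧ t = j
  · obtain ⟨rfl, rfl⟩ := hij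
    refine ⟨?_, hkt⟩
    simpa using add_nonneg (hE k t).1 hΔ
  · simpa [single_apply, hij] using hE i j

theorem add_smul_single_diag (hkt : k ≠ t) (hdiag : ∀ i, E i i = 0) (i : ι) :
    (E + Δ • single k t (1 : ℝ)) i i = 0 := by
  have : ¬(k = i ∧ t = i) := fun h => hkt (h.1.trans h.2.symm)
  simp [this, hdiag i]

end Perturbation

theorem stmt_15_general {n : ℕ} (E : Matrix (Fin n) (Fin n) ℝ)
    (hdiag : ∀ i, E i i = 0)
    (hbound : ∀ i j, 0 ≤ E i j ∧ E i j < 1 / ((n : ℝ) - 1))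
    (k t : Fin n) (hkt : k ≠ t) (Δ : ℝ) (hΔ : 0 < Δ)
    (hbound' : (E + Δ • Matrix.single k t (1 : ℝ)) k t < 1 / ((n : ℝ) - 1)) :
    let P := (1 - E)⁻¹
    let P' := (1 - (E + Δ • Matrix.single k t (1 : ℝ)))⁻¹
    P' k t - P k t > 0 ∧
    ∀ i j, i ≠ k ∨ j ≠ t → P' k t - P k t > P' i j - P i j := by
  intro P P'
  set E' := E + Δ • single k t (1 : ℝ)
  have hcard : (Fintype.card (Fin n) : ℝ) - 1 = n - 1 := by rw [Fintype.card_fin]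
  have hE'bound := add_smul_single_bounds hbound hΔ.le hbound'
  have hE0 i j := (hbound i j).1
  have hE'0 i j := (hE'bound i j).1
  have hErow i : ∑ j, E i j < 1 :=
    sum_lt_one_of_lt_inv_card_sub_one (hdiag i) fun j => hcard ▸ (hbound i j).2
  have hEcol j : ∑ i, E i j < 1 :=
    sum_lt_one_of_lt_inv_card_sub_one (hdiag j) fun i => hcard ▸ (hbound i j).2
  have hE'row i : ∑ j, E' i j < 1 :=
    sum_lt_one_of_lt_inv_card_sub_one (add_smul_single_diag hkt hdiag i)
      fun j => hcard ▸ (hE'bound i j).2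
  have hdiff i j : P' i j - P i j = Δ * (P' i k * P t j) :=
    inv_sub_inv_apply_of_sub_eq_single (isUnit_det_one_sub hE'0 hE'row)
      (isUnit_det_one_sub hE0 hErow) (by rw [smul_single, smul_eq_mul, mul_one]; abel) i j
  have hP'kk : 0 < P' k k := one_pos.trans_le (one_le_one_sub_inv_diag hE'0 hE'row k)
  have hPtt : 0 < P t t := one_pos.trans_le (one_le_one_sub_inv_diag hE0 hErow t)
  refine ⟨by rw [hdiff]; positivity, fun i j hij => ?_⟩
  rw [hdiff, hdiff, gt_iff_lt, mul_lt_mul_iff_right₀ hΔ]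
  have hP'ik := one_sub_inv_apply_le_diag hE'0 hE'row i k
  have hPtj := one_sub_inv_apply_le_diag_of_col hE0 hEcol t j
  rcases hij with hik | hjt
  · exact mul_lt_mul_of_lt_of_le_of_nonneg_of_pos (one_sub_inv_apply_lt_diag hE'0 hE'row hik)
      hPtj (one_sub_inv_nonneg hE'0 hE'row i k) hPtt
  · exact mul_lt_mul_of_le_of_lt_of_nonneg_of_pos hP'ik
      (one_sub_inv_apply_lt_diag_of_col hE0 hEcol hjt.symm) (one_sub_inv_nonneg hE0 hErow t j) hP'kk

/-- Monotonicity (item 1) for route accessibility: if the weight of the arc `(k,t)` is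
increased by `Δ > 0` (staying below the bound `1/(n-1)`), then `P k t` strictly
increases, and its increment strictly exceeds the increment of any other entry
`P i j` with `i ≠ k` or `j ≠ t`. -/
theorem stmt_15 {n : ℕ} (hn : 2 ≤ n) (E : Matrix (Fin n) (Fin n) ℝ)
    (hdiag : ∀ i, E i i = 0)
    (hbound : ∀ i j, 0 ≤ E i j ∧ E i j < 1 / ((n : ℝ) - 1))
    (k t : Fin n) (hkt : k ≠ t) (Δ : ℝ) (hΔ : 0 < Δ)
    (hbound' : (E + Δ • Matrix.single k t (1 : ℝ)) k t < 1 / ((n : ℝ) - 1)) :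
    let P := (1 - E)⁻¹
    let P' := (1 - (E + Δ • Matrix.single k t (1 : ℝ)))⁻¹
    P' k t - P k t > 0 ∧
    ∀ i j, i ≠ k ∨ j ≠ t → P' k t - P k t > P' i j - P i j :=
  stmt_15_general E hdiag hbound k t hkt Δ hΔ hbound'
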